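/- arXiv:1701.03896 — 2 statements merged into one kernel-verified Lean document; each statement's English description precedes it below -/
import Mathlib

section
/- Let r divide n with n/r > 2, and let ω ∈ S_n be the permutation with m_ω^r(i) ≡ i (mod n/r) (taking values in [n/r]), i.e., m_ω^r = (1,2,...,n/r, 1,2,...,n/r, ...). Then |S(m_ω^r, 1)| = 1 + (n−1)² − (r−1)n, and for all σ ∈ S_n, |S(m_σ^r,1)| ≤ |S(m_ω^r,1)|. -/
/-!
Let every letter of the word `m` occur `r` times. A word is in `S(m, 1)` iff it is `m ∘ φ(a, b)`:
a common subsequence of length `n - 1` omits one position from each word, and the omitted letters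
agree because both words are rearrangements of the same letters. Sliding `b` past letters equal to
`m a`, moving `a` to the start of its run, and writing an adjacent swap as `(a - 1, a)` bring every
pair that changes `m` to a canonical one; a run start `a` has at most `n - r - 1` canonical targets
(`n - r` if `a` is the first position), so `|S(m, 1)| ≤ n (n - r - 1) + 2`. For `m_ω^r` every
position starts a run and letters at distance one or two differ, so `m ∘ φ(a, b)` differs from `m`
exactly between `a` and `b`, and its letter at `a + 1` tells `(a, b)` from `(b, a)`: distinct
canonical pairs give distinct words, and `n (n - r - 1) + 2 = 1 + (n - 1)² - (r - 1) n`.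
-/


namespace UlamPaper

/-- Underlying function of the translocation `φ(i,j)` (0-indexed). -/
def tf (i j k : ℕ) : ℕ :=
  if i ≤ j then (if k < i ∨ j < k then k else if k = j then i else k + 1)
  else (if k < j ∨ i < k then k else if k = j then i else k - 1)

theorem tf_lt {n i j k : ℕ} (hi : i < n) (hj : j < n) (hk : k < n) : tf i j k < n := by
  unfold tf; split_ifs <;> omega

theorem tf_tf (i j k : ℕ) : tf j i (tf i j k) = k := by
  unfold tf; split_ifs <;> omega

/-- The translocation `φ(i,j)` as a permutation of `Fin n`: it deletes the entry in
position `i` and reinserts it at position `j`, shifting intermediate entries. -/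
def transloc {n : ℕ} (i j : Fin n) : Equiv.Perm (Fin n) where
  toFun k := ⟨tf i.val j.val k.val, tf_lt i.isLt j.isLt k.isLt⟩
  invFun k := ⟨tf j.val i.val k.val, tf_lt j.isLt i.isLt k.isLt⟩
  left_inv k := Fin.ext (tf_tf i.val j.val k.val)
  right_inv k := Fin.ext (tf_tf j.val i.val k.val)

/-- `IsTransloc φ` : `φ` is a translocation. -/
def IsTransloc {n : ℕ} (φ : Equiv.Perm (Fin n)) : Prop := ∃ i j : Fin n, φ = transloc i j

/-- Length of the longest common subsequence of two `n`-length sequences. -/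
noncomputable def lcsLen {n : ℕ} {α : Type*} (u v : Fin n → α) : ℕ :=
  sSup {k | ∃ f g : Fin k → Fin n, StrictMono f ∧ StrictMono g ∧ ∀ p, u (f p) = v (g p)}

/-- The Ulam distance `d(σ,π) = n - ℓ(σ,π)`. -/
noncomputable def ulamDist {n : ℕ} (σ π : Equiv.Perm (Fin n)) : ℕ :=
  n - lcsLen (⇑σ) (⇑π)

/-- The `r`-regular multipermutation `m_σ^r` (with values in `[1, n/r]`). -/
def mult {n : ℕ} (r : ℕ) (σ : Equiv.Perm (Fin n)) : Fin n → ℕ :=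
  fun i => (σ i).val / r + 1

/-- The `r`-regular Ulam distance, expressed as `n - ℓ(m_σ^r, m_π^r)`. -/
noncomputable def multDist {n : ℕ} (r : ℕ) (σ π : Equiv.Perm (Fin n)) : ℕ :=
  n - lcsLen (mult r σ) (mult r π)

/-- The `r`-regular Ulam sphere of radius `t` centered at `m_σ^r`. -/
def multSphere {n : ℕ} (r : ℕ) (σ : Equiv.Perm (Fin n)) (t : ℕ) : Set (Fin n → ℕ) :=
  {x | ∃ π : Equiv.Perm (Fin n), x = mult r π ∧ multDist r σ π ≤ t}

open Finset

variable {n : ℕ} {α : Type*}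

section Transloc

lemma transloc_val (a b k : Fin n) : (transloc a b k).val = tf a.val b.val k.val := rfl

lemma transloc_self (a : Fin n) : transloc a a = 1 := by
  ext k
  simp only [transloc_val, Equiv.Perm.coe_one, id_eq]
  unfold tf; split_ifs <;> omega

lemma transloc_comm_of_val_succ_eq {a b : Fin n} (h : b.val + 1 = a.val) :
    transloc a b = transloc b a := by
  ext k
  simp only [transloc_val]
  unfold tf; split_ifs <;> omega

lemma transloc_apply_right (a b : Fin n) : transloc a b b = a := by
  ext
  simp only [transloc_val]
  unfold tf; split_ifs <;> omega

lemma transloc_apply_of_not_between {a b k : Fin n}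
    (hk : k.val < min a.val b.val ∨ max a.val b.val < k.val) : transloc a b k = k := by
  ext
  simp only [transloc_val]
  unfold tf; split_ifs <;> omega

lemma val_transloc_of_le_of_lt {a b k : Fin n} (hak : a.val ≤ k.val) (hkb : k.val < b.val) :
    (transloc a b k).val = k.val + 1 := by
  simp only [transloc_val]
  unfold tf; split_ifs <;> omega

lemma val_transloc_of_lt_of_le {a b k : Fin n} (hbk : b.val < k.val) (hka : k.val ≤ a.val) :
    (transloc a b k).val = k.val - 1 := by
  simp only [transloc_val]
  unfold tf; split_ifs <;> omega

lemma transloc_succAbove (a b : Fin (n + 1)) (p : Fin n) :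
    transloc a b (b.succAbove p) = a.succAbove p := by
  ext
  simp only [transloc_val, Fin.succAbove, Fin.lt_def, Fin.val_castSucc]
  split_ifs <;> simp only [Fin.val_succ, Fin.val_castSucc] <;> unfold tf <;> split_ifs <;> omega

end Transloc

section LongestCommonSubsequence

def commonSubseqLengths (u v : Fin n → α) : Set ℕ :=
  {k | ∃ f g : Fin k → Fin n, StrictMono f ∧ StrictMono g ∧ ∀ p, u (f p) = v (g p)}

lemma bddAbove_commonSubseqLengths (u v : Fin n → α) : BddAbove (commonSubseqLengths u v) :=
  ⟨n, by rintro k ⟨f, -, hf, -⟩; simpa using Fintype.card_le_of_injective f hf.injective⟩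

lemma le_lcsLen {u v : Fin n → α} {k : ℕ} {f g : Fin k → Fin n} (hf : StrictMono f)
    (hg : StrictMono g) (h : ∀ p, u (f p) = v (g p)) : k ≤ lcsLen u v :=
  le_csSup (bddAbove_commonSubseqLengths u v) ⟨f, g, hf, hg, h⟩

lemma exists_strictMono_of_le_lcsLen {u v : Fin n → α} {k : ℕ} (hk : k ≤ lcsLen u v) :
    ∃ f g : Fin k → Fin n, StrictMono f ∧ StrictMono g ∧ ∀ p, u (f p) = v (g p) := by
  have hzero : 0 ∈ commonSubseqLengths u v :=
    ⟨Fin.elim0, Fin.elim0, fun p => p.elim0, fun p => p.elim0, fun p => p.elim0⟩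
  obtain ⟨f, g, hf, hg, h⟩ := Nat.sSup_mem ⟨0, hzero⟩ (bddAbove_commonSubseqLengths u v)
  exact ⟨f ∘ Fin.castLE hk, g ∘ Fin.castLE hk, hf.comp (Fin.strictMono_castLE hk),
    hg.comp (Fin.strictMono_castLE hk), fun p => h _⟩

lemma exists_eq_succAbove_of_strictMono {f : Fin n → Fin (n + 1)} (hf : StrictMono f) :
    ∃ a : Fin (n + 1), f = a.succAbove := by
  obtain ⟨a, ha⟩ : ∃ a, ∀ p, f p ≠ a := by
    by_contra! h
    simpa using Fintype.card_le_of_surjective f h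
  refine ⟨a, ?_⟩
  rw [orderEmbOfFin_unique (s := {a}ᶜ) (by simp [card_compl]) (fun p => by simpa using ha p) hf,
    orderEmbOfFin_compl_singleton_eq_succAboveOrderEmb]
  rfl

lemma comp_perm_eq_of_forall_ne {ι : Type*} [Fintype ι] [DecidableEq ι] {u : ι → α}
    {τ₁ τ₂ : Equiv.Perm ι} (b : ι) (h : ∀ k ≠ b, u (τ₁ k) = u (τ₂ k)) : u ∘ τ₁ = u ∘ τ₂ := by
  funext k
  rcases eq_or_ne k b with rfl | hk
  · have hmap (τ : Equiv.Perm ι) : (univ.val.map fun j => u (τ j)) = univ.val.map u := by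
      conv_rhs => rw [← Multiset.map_univ_val_equiv τ, Multiset.map_map]
      rfl
    have hsplit : (univ : Finset ι).val = k ::ₘ (univ.erase k).val := by
      rw [erase_val, Multiset.cons_erase (mem_def.1 (mem_univ k))]
    have := (hmap τ₁).trans (hmap τ₂).symm
    rwa [hsplit, Multiset.map_cons, Multiset.map_cons,
      Multiset.map_congr rfl fun j hj => h j (ne_of_mem_erase hj),
      Multiset.cons_inj_left] at this
  · exact h k hk

lemma n_le_lcsLen_comp_transloc (u : Fin (n + 1) → α) (a b : Fin (n + 1)) :
    n ≤ lcsLen u (u ∘ transloc a b) :=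
  le_lcsLen (Fin.strictMono_succAbove a) (Fin.strictMono_succAbove b)
    fun p => by simp [transloc_succAbove]

/-- A common subsequence of length `n` omits one position `a` of `u` and one position `b` of
`u ∘ τ`; off `b` the word `u ∘ τ` is then `u ∘ transloc a b`, and the two letters at `b` agree
because both words are rearrangements of `u`. -/
lemma exists_comp_transloc_of_n_le_lcsLen {u : Fin (n + 1) → α} {τ : Equiv.Perm (Fin (n + 1))}
    (h : n ≤ lcsLen u (u ∘ τ)) : ∃ a b, u ∘ τ = u ∘ transloc a b := by
  obtain ⟨f, g, hf, hg, hfg⟩ := exists_strictMono_of_le_lcsLen h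
  obtain ⟨a, rfl⟩ := exists_eq_succAbove_of_strictMono hf
  obtain ⟨b, rfl⟩ := exists_eq_succAbove_of_strictMono hg
  refine ⟨a, b, comp_perm_eq_of_forall_ne b fun k hk => ?_⟩
  obtain ⟨p, rfl⟩ := Fin.exists_succAbove_eq hk
  rw [transloc_succAbove]
  exact (hfg p).symm

end LongestCommonSubsequence

def translocate (m : Fin n → α) (p : Fin n × Fin n) : Fin n → α := m ∘ transloc p.1 p.2

lemma mult_mul (r : ℕ) (σ τ : Equiv.Perm (Fin n)) : mult r (σ * τ) = mult r σ ∘ τ := rfl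

theorem multSphere_one_eq_range (r : ℕ) (σ : Equiv.Perm (Fin (n + 1))) :
    multSphere r σ 1 = Set.range (translocate (mult r σ)) := by
  ext x
  constructor
  · rintro ⟨π, rfl, hd⟩
    have hτ : mult r π = mult r σ ∘ ⇑(σ⁻¹ * π) := by rw [← mult_mul, mul_inv_cancel_left]
    obtain ⟨a, b, h⟩ := exists_comp_transloc_of_n_le_lcsLen (τ := σ⁻¹ * π)
      (by rw [← hτ]; unfold multDist at hd; omega)
    exact ⟨(a, b), (hτ.trans h).symm⟩
  · rintro ⟨⟨a, b⟩, rfl⟩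
    refine ⟨σ * transloc a b, rfl, ?_⟩
    have := n_le_lcsLen_comp_transloc (mult r σ) a b
    unfold multDist
    rw [mult_mul]
    omega

section CanonicalPairs

variable {m : Fin n → α}

/-- Excluding `b = a - 1` avoids counting the adjacent swap twice, as `(a, a - 1)` and
`(a - 1, a)`; the last condition says that `a` starts a run of equal letters. -/
def IsCanonical (m : Fin n → α) (a b : Fin n) : Prop :=
  m a ≠ m b ∧ b.val + 1 ≠ a.val ∧ ∀ c : Fin n, c.val + 1 = a.val → m c ≠ m a

def canonicalPairs (m : Fin n → α) : Set (Fin n × Fin n) := {p | IsCanonical m p.1 p.2}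

lemma comp_transloc_eq_of_forall_tf {a b a' b' x y : Fin n} (hxy : m x = m y)
    (h : ∀ k : Fin n, tf a b k = tf a' b' k ∨ (tf a b k = x ∧ tf a' b' k = y) ∨
      (tf a b k = y ∧ tf a' b' k = x)) :
    m ∘ transloc a b = m ∘ transloc a' b' := by
  funext k
  simp only [Function.comp_apply]
  rcases h k with h | ⟨h, h'⟩ | ⟨h, h'⟩
  · exact congrArg m (Fin.ext h)
  · rw [show transloc a b k = x from Fin.ext h, show transloc a' b' k = y from Fin.ext h', hxy]
  · rw [show transloc a b k = y from Fin.ext h, show transloc a' b' k = x from Fin.ext h', hxy]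

lemma comp_transloc_eq_of_lt_of_apply_eq {a b b' : Fin n} (hab : a.val < b.val)
    (hb : b'.val + 1 = b.val) (hm : m a = m b) : m ∘ transloc a b = m ∘ transloc a b' :=
  comp_transloc_eq_of_forall_tf hm fun k => by unfold tf; split_ifs <;> omega

lemma comp_transloc_eq_of_gt_of_apply_eq {a b b' : Fin n} (hab : b.val < a.val)
    (hb : b.val + 1 = b'.val) (hm : m a = m b) : m ∘ transloc a b = m ∘ transloc a b' :=
  comp_transloc_eq_of_forall_tf hm.symm fun k => by unfold tf; split_ifs <;> omega

lemma comp_transloc_eq_of_apply_pred_eq {a c : Fin n} (b : Fin n) (hc : c.val + 1 = a.val)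
    (hm : m c = m a) : m ∘ transloc a b = m ∘ transloc c b :=
  comp_transloc_eq_of_forall_tf hm.symm fun k => by unfold tf; split_ifs <;> omega

/-- Slide `b` towards `a` past a letter equal to `m a`, turn `(a, a - 1)` into `(a - 1, a)`, or
move `a` to the start of its run. -/
lemma exists_comp_transloc_eq_of_not_isCanonical {a b : Fin n} (hab : a ≠ b)
    (h : ¬ IsCanonical m a b) : ∃ a' b' : Fin n,
      2 * a'.val + Nat.dist a'.val b'.val < 2 * a.val + Nat.dist a.val b.val ∧
      m ∘ transloc a b = m ∘ transloc a' b' := by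
  have hab' : a.val ≠ b.val := Fin.val_ne_of_ne hab
  unfold Nat.dist
  by_cases hm : m a = m b
  · rcases Nat.lt_or_gt_of_ne hab' with hlt | hgt
    · exact ⟨a, ⟨b.val - 1, by omega⟩, by simp only; omega,
        comp_transloc_eq_of_lt_of_apply_eq hlt (by simp only; omega) hm⟩
    · exact ⟨a, ⟨b.val + 1, by omega⟩, by simp only; omega,
        comp_transloc_eq_of_gt_of_apply_eq hgt rfl hm⟩
  by_cases hadj : b.val + 1 = a.val
  · exact ⟨b, a, by omega, by rw [transloc_comm_of_val_succ_eq hadj]⟩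
  obtain ⟨c, hc, hmc⟩ : ∃ c : Fin n, c.val + 1 = a.val ∧ m c = m a := by
    simpa [IsCanonical, hm, hadj] using h
  exact ⟨c, b, by omega, comp_transloc_eq_of_apply_pred_eq b hc hmc⟩

lemma range_translocate_subset (m : Fin n → α) :
    Set.range (translocate m) ⊆ insert m (translocate m '' canonicalPairs m) := by
  rintro _ ⟨⟨a, b⟩, rfl⟩
  induction hμ : 2 * a.val + Nat.dist a.val b.val using Nat.strong_induction_on
    generalizing a b with
  | _ μ ih =>
    by_cases hab : a = b
    · subst hab
      exact Or.inl (by simp [translocate, transloc_self])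
    by_cases hc : IsCanonical m a b
    · exact Or.inr ⟨(a, b), hc, rfl⟩
    obtain ⟨a', b', hlt, heq⟩ := exists_comp_transloc_eq_of_not_isCanonical hab hc
    rw [translocate, heq]
    exact ih _ (hμ ▸ hlt) a' b' rfl

end CanonicalPairs

section Injectivity

variable {m : Fin n → α}

lemma comp_transloc_ne_self {a b : Fin n} (hab : m a ≠ m b) : m ∘ transloc a b ≠ m := fun h =>
  hab (by simpa [transloc_apply_right] using congrFun h b)

lemma apply_transloc_ne_iff (hadj : ∀ k l : Fin n, k.val + 1 = l.val → m k ≠ m l)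
    {a b : Fin n} (hab : m a ≠ m b) (k : Fin n) :
    m (transloc a b k) ≠ m k ↔ min a.val b.val ≤ k.val ∧ k.val ≤ max a.val b.val := by
  have hab' : a.val ≠ b.val := fun h => hab (congrArg m (Fin.ext h))
  by_cases hk : k.val < min a.val b.val ∨ max a.val b.val < k.val
  · rw [transloc_apply_of_not_between hk]
    simp only [ne_eq, not_true_eq_false, false_iff]
    omega
  refine iff_of_true ?_ (by omega)
  rcases eq_or_ne k b with rfl | hkb
  · rwa [transloc_apply_right]
  have hkb' : k.val ≠ b.val := Fin.val_ne_of_ne hkb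
  rcases Nat.lt_or_gt_of_ne hab' with hlt | hgt
  · exact fun h => hadj k _ (val_transloc_of_le_of_lt (by omega) (by omega)).symm h.symm
  · exact hadj _ k (by rw [val_transloc_of_lt_of_le (by omega) (by omega)]; omega)

lemma eq_or_swap_of_comp_transloc_eq (hadj : ∀ k l : Fin n, k.val + 1 = l.val → m k ≠ m l)
    {a b a' b' : Fin n} (hab : m a ≠ m b) (hab' : m a' ≠ m b')
    (h : m ∘ transloc a b = m ∘ transloc a' b') : (a = a' ∧ b = b') ∨ (a = b' ∧ b = a') := by
  have hiff (k : Fin n) : (min a.val b.val ≤ k.val ∧ k.val ≤ max a.val b.val) ↔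
      (min a'.val b'.val ≤ k.val ∧ k.val ≤ max a'.val b'.val) := by
    rw [← apply_transloc_ne_iff hadj hab, ← apply_transloc_ne_iff hadj hab']
    exact Iff.of_eq (congrArg (· ≠ m k) (congrFun h k))
  have hne : a.val ≠ b.val := fun e => hab (congrArg m (Fin.ext e))
  have hne' : a'.val ≠ b'.val := fun e => hab' (congrArg m (Fin.ext e))
  have := hiff a; have := hiff b; have := hiff a'; have := hiff b'
  rcases (by omega : (a.val = a'.val ∧ b.val = b'.val) ∨ (a.val = b'.val ∧ b.val = a'.val))
    with ⟨h₁, h₂⟩ | ⟨h₁, h₂⟩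
  · exact Or.inl ⟨Fin.ext h₁, Fin.ext h₂⟩
  · exact Or.inr ⟨Fin.ext h₁, Fin.ext h₂⟩

/-- At position `a + 1` the two words read `m (a + 2)` and `m a`. -/
lemma comp_transloc_ne_comp_transloc_swap
    (hdist : ∀ k l : Fin n, k.val + 2 = l.val → m k ≠ m l) {a b : Fin n}
    (hab : a.val + 2 ≤ b.val) : m ∘ transloc a b ≠ m ∘ transloc b a := by
  intro h
  have hk : a.val + 1 < n := by omega
  have e₁ : transloc a b ⟨a.val + 1, hk⟩ = ⟨a.val + 2, by omega⟩ :=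
    Fin.ext (val_transloc_of_le_of_lt (by simp) (by simp only; omega))
  have e₂ : transloc b a ⟨a.val + 1, hk⟩ = a :=
    Fin.ext (by rw [val_transloc_of_lt_of_le (by simp) (by simp only; omega)]; rfl)
  exact hdist a _ rfl (by simpa [e₁, e₂] using (congrFun h ⟨a.val + 1, hk⟩).symm)

lemma injOn_translocate_canonicalPairs (hadj : ∀ k l : Fin n, k.val + 1 = l.val → m k ≠ m l)
    (hdist : ∀ k l : Fin n, k.val + 2 = l.val → m k ≠ m l) :
    Set.InjOn (translocate m) (canonicalPairs m) := by
  rintro ⟨a, b⟩ hp ⟨a', b'⟩ hp' h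
  rcases eq_or_swap_of_comp_transloc_eq hadj hp.1 hp'.1 h with ⟨rfl, rfl⟩ | ⟨rfl, rfl⟩
  · rfl
  have hab : a.val ≠ b.val := fun e => hp.1 (congrArg m (Fin.ext e))
  rcases Nat.lt_or_gt_of_ne hab with hlt | hgt
  · have : a.val + 1 ≠ b.val := hp'.2.1
    exact absurd h (comp_transloc_ne_comp_transloc_swap (a := a) (b := b) hdist (by omega))
  · have : b.val + 1 ≠ a.val := hp.2.1
    exact absurd h.symm (comp_transloc_ne_comp_transloc_swap (a := b) (b := a) hdist (by omega))

end Injectivity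

section Counting

lemma ncard_range_translocate_le (m : Fin n → α) :
    (Set.range (translocate m)).ncard ≤ (canonicalPairs m).ncard + 1 :=
  calc _ ≤ (insert m (translocate m '' canonicalPairs m)).ncard :=
        Set.ncard_le_ncard (range_translocate_subset m) (((Set.toFinite _).image _).insert m)
    _ ≤ _ := (Set.ncard_insert_le _ _).trans
        (Nat.add_le_add_right (Set.ncard_image_le (Set.toFinite _)) 1)

lemma ncard_range_translocate_eq {m : Fin (n + 1) → α}
    (hadj : ∀ k l : Fin (n + 1), k.val + 1 = l.val → m k ≠ m l)
    (hdist : ∀ k l : Fin (n + 1), k.val + 2 = l.val → m k ≠ m l) :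
    (Set.range (translocate m)).ncard = (canonicalPairs m).ncard + 1 := by
  have hself : m ∈ Set.range (translocate m) :=
    ⟨(0, 0), by simp [translocate, transloc_self]⟩
  have hnotMem : m ∉ translocate m '' canonicalPairs m :=
    fun ⟨_, hp, h⟩ => comp_transloc_ne_self hp.1 h
  rw [(range_translocate_subset m).antisymm
      (Set.insert_subset hself (Set.image_subset_range _ _)),
    Set.ncard_insert_of_notMem hnotMem ((Set.toFinite _).image _),
    (injOn_translocate_canonicalPairs hadj hdist).ncard_image]

lemma isCanonical_zero_iff {m : Fin (n + 1) → α} {b : Fin (n + 1)} :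
    IsCanonical m 0 b ↔ m b ≠ m 0 := by
  simp [IsCanonical, ne_comm]

variable [DecidableEq α]

instance (m : Fin n → α) (a b : Fin n) : Decidable (IsCanonical m a b) :=
  inferInstanceAs (Decidable (_ ∧ _ ∧ _))

lemma filter_isCanonical_succ {m : Fin (n + 1) → α} {i : Fin n} (hi : m i.castSucc ≠ m i.succ) :
    ({b | IsCanonical m i.succ b} : Finset _) =
      ({b | m b ≠ m i.succ} : Finset _).erase i.castSucc := by
  ext b
  simp only [IsCanonical, mem_filter, mem_univ, true_and, mem_erase, Fin.val_succ, ne_eq,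
    Fin.ext_iff, Fin.val_castSucc, add_left_inj]
  refine ⟨fun ⟨h₁, h₂, _⟩ => ⟨h₂, Ne.symm h₁⟩, fun ⟨h₁, h₂⟩ => ⟨Ne.symm h₂, h₁, fun c hc => ?_⟩⟩
  rwa [show c = i.castSucc from Fin.ext (by simpa using hc)]

lemma card_filter_isCanonical_succ_le {m : Fin (n + 1) → α} (i : Fin n) :
    #{b | IsCanonical m i.succ b} ≤ #{b | m b ≠ m i.succ} - 1 := by
  by_cases hi : m i.castSucc = m i.succ
  · have : ({b | IsCanonical m i.succ b} : Finset _) = ∅ :=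
      filter_eq_empty_iff.2 fun b _ h => h.2.2 i.castSucc (by simp) hi
    simp [this]
  · rw [filter_isCanonical_succ hi, card_erase_of_mem (by simpa [eq_comm] using hi)]

lemma ncard_canonicalPairs (m : Fin (n + 1) → α) :
    (canonicalPairs m).ncard = #{b | m b ≠ m 0} + ∑ i : Fin n, #{b | IsCanonical m i.succ b} := by
  rw [canonicalPairs, Set.ncard_eq_toFinset_card', Set.toFinset_ofPred, card_filter,
    Fintype.sum_prod_type, Fin.sum_univ_succ]
  simp only [← card_filter, isCanonical_zero_iff]

lemma card_filter_ne_of_forall_card_filter_eq {m : Fin n → α} {r : ℕ}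
    (hm : ∀ a, #{b | m b = m a} = r) (a : Fin n) : #{b | m b ≠ m a} = n - r := by
  have := card_filter_add_card_filter_not (s := univ) fun b => m b = m a
  rw [hm a, card_univ, Fintype.card_fin] at this
  simp only [ne_eq]
  omega

lemma ncard_canonicalPairs_le {m : Fin (n + 1) → α} {r : ℕ} (hm : ∀ a, #{b | m b = m a} = r) :
    (canonicalPairs m).ncard ≤ (n + 1 - r) + n * (n - r) := by
  rw [ncard_canonicalPairs, card_filter_ne_of_forall_card_filter_eq hm]
  gcongr
  calc ∑ i : Fin n, #{b | IsCanonical m i.succ b}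
      ≤ ∑ i : Fin n, (n + 1 - r - 1) := by
        gcongr with i
        exact (card_filter_isCanonical_succ_le (m := m) i).trans_eq
          (by rw [card_filter_ne_of_forall_card_filter_eq hm])
    _ = n * (n - r) := by simp; omega

lemma ncard_canonicalPairs_eq {m : Fin (n + 1) → α} {r : ℕ} (hm : ∀ a, #{b | m b = m a} = r)
    (hadj : ∀ i : Fin n, m i.castSucc ≠ m i.succ) :
    (canonicalPairs m).ncard = (n + 1 - r) + n * (n - r) := by
  rw [ncard_canonicalPairs, card_filter_ne_of_forall_card_filter_eq hm]
  congr 1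
  calc ∑ i : Fin n, #{b | IsCanonical m i.succ b}
      = ∑ i : Fin n, (n + 1 - r - 1) := by
        refine sum_congr rfl fun i _ => ?_
        rw [filter_isCanonical_succ (hadj i), card_erase_of_mem (by simpa [eq_comm] using hadj i),
          card_filter_ne_of_forall_card_filter_eq hm]
    _ = n * (n - r) := by simp; omega

end Counting

lemma card_filter_val_div_eq {r c : ℕ} (hr : 0 < r) (h : (c + 1) * r ≤ n) :
    #{i : Fin n | i.val / r = c} = r := by
  rw [← card_map Fin.valEmbedding]
  convert Nat.card_Ico (c * r) (c * r + r) using 2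
  · ext x
    simp only [mem_map, mem_filter, mem_univ, true_and, Fin.valEmbedding_apply, mem_Ico,
      Nat.div_eq_iff hr]
    constructor
    · rintro ⟨i, hi, rfl⟩
      omega
    · intro hx
      exact ⟨⟨x, by rw [add_one_mul] at h; omega⟩, by simp only; omega, rfl⟩
  · omega

lemma card_filter_mult_eq {r : ℕ} (hr : 0 < r) (hdvd : r ∣ n) (σ : Equiv.Perm (Fin n))
    (a : Fin n) : #{b | mult r σ b = mult r σ a} = r := by
  rw [card_equiv σ (t := {i | i.val / r = (σ a).val / r}) (by simp [mult])]
  refine card_filter_val_div_eq hr ?_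
  calc ((σ a).val / r + 1) * r ≤ n / r * r :=
        Nat.mul_le_mul_right r (Nat.div_lt_div_of_lt_of_dvd hdvd (σ a).isLt)
    _ = n := Nat.div_mul_cancel hdvd

lemma mod_add_ne_mod {q d : ℕ} (k : ℕ) (hd : 0 < d) (hdq : d < q) : (k + d) % q ≠ k % q :=
  fun h => absurd (Nat.le_of_dvd hd (Nat.add_modEq_left_iff.1 h)) (by omega)

/-- For `n/r > 2` and `ω` with `m_ω^r(i) ≡ i (mod n/r)`, the sphere
`S(m_ω^r, 1)` has size `1 + (n−1)² − (r−1)n` and is maximal among all centers. -/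
theorem multSphere_omega_max {n r : ℕ} (hr : 0 < r) (hdvd : r ∣ n) (hnr : 2 < n / r)
    (ω : Equiv.Perm (Fin n)) (hω : ∀ i : Fin n, mult r ω i = i.val % (n / r) + 1) :
    (multSphere r ω 1).ncard = 1 + (n - 1) ^ 2 - (r - 1) * n ∧
    ∀ σ : Equiv.Perm (Fin n), (multSphere r σ 1).ncard ≤ (multSphere r ω 1).ncard := by
  obtain ⟨n, rfl⟩ := Nat.exists_eq_add_one_of_ne_zero (n := n) (by rintro rfl; simp at hnr)
  have hrn : r ≤ n := by have := Nat.mul_le_of_le_div r 3 (n + 1) hnr; omega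
  have hω_ne {d : ℕ} (hd : 0 < d) (hdq : d < (n + 1) / r) (k l : Fin (n + 1))
      (hkl : k.val + d = l.val) : mult r ω k ≠ mult r ω l := by
    rw [hω, hω, ← hkl]
    simpa using (mod_add_ne_mod k.val hd hdq).symm
  have hω_card : (multSphere r ω 1).ncard = (n + 1 - r) + n * (n - r) + 1 := by
    rw [multSphere_one_eq_range, ncard_range_translocate_eq (hω_ne one_pos (by omega))
      (hω_ne two_pos hnr), ncard_canonicalPairs_eq (card_filter_mult_eq hr hdvd ω)
      fun i => hω_ne one_pos (by omega) _ _ rfl]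
  refine ⟨?_, fun σ => ?_⟩
  · obtain ⟨s, rfl⟩ := Nat.exists_eq_add_of_le hrn
    obtain ⟨t, rfl⟩ := Nat.exists_eq_add_one_of_ne_zero hr.ne'
    have hsq : (t + 1 + s) ^ 2 = t * (t + 1 + s + 1) + ((s + 1) + (t + 1 + s) * s) := by ring
    rw [hω_card, show t + 1 + s + 1 - (t + 1) = s + 1 by omega,
      show t + 1 + s - (t + 1) = s by omega, Nat.add_sub_cancel, Nat.add_sub_cancel]
    omega
  · rw [hω_card, multSphere_one_eq_range]
    exact (ncard_range_translocate_le _).trans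
      (Nat.add_le_add_right (ncard_canonicalPairs_le (card_filter_mult_eq hr hdvd σ)) 1)

end UlamPaper
end

section
/- For any m ∈ Z^n and index i ∈ [n], the set E_i(m) of alternating duplicate translocations starting at i is nonempty if and only if: (1) m(i) ≠ m(i−1) (or i = 1), and (2) there exist j ∈ [i+1, n] and k ∈ [i, j−2] such that m(p) = m(p+1) for all p ∈ [i, k−1], the substring m[k,j] is alternating, and m[k,j] has length at least 4. -/
namespace UlamPaper

/-- `T_n`, the unique set of translocations: all `φ(i,j)` with `i − j ≠ 1`. -/
def Tset (n : ℕ) : Set (Equiv.Perm (Fin n)) :=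
  {φ | ∃ i j : Fin n, i.val ≠ j.val + 1 ∧ φ = transloc i j}

/-- The standard duplicate translocation set `D(m)`. -/
def Dset {n : ℕ} {α : Type*} (m : Fin n → α) : Set (Equiv.Perm (Fin n)) :=
  {φ | ∃ i j : Fin n, i.val ≠ j.val + 1 ∧ φ ≠ 1 ∧ φ = transloc i j ∧
    (m i = m j ∨ (0 < i.val ∧
      m i = m ⟨i.val - 1, lt_of_le_of_lt (Nat.sub_le _ _) i.isLt⟩))}

/-- The alternating duplicate translocation set `E(m)`. -/
def Eset {n : ℕ} {α : Type*} (m : Fin n → α) : Set (Equiv.Perm (Fin n)) :=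
  {φ | ∃ i j : Fin n, φ = transloc i j ∧ φ ∈ Tset n ∧ φ ∉ Dset m ∧ i < j ∧
    ∃ k : Fin n, i ≤ k ∧ k.val + 2 ≤ j.val ∧
      transloc j k ∈ Tset n ∧ transloc j k ∉ Dset m ∧
      m ∘ ⇑(transloc i j) = m ∘ ⇑(transloc j k)}

private lemma tf_eval_lo {i j p : ℕ} (h1 : p < i) (h2 : p < j) : tf i j p = p := by
  unfold tf; split_ifs <;> omega
private lemma tf_eval_hi {i j p : ℕ} (h1 : i < p) (h2 : j < p) : tf i j p = p := by
  unfold tf; split_ifs <;> omega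
private lemma tf_eval_self (i j : ℕ) : tf i j j = i := by
  unfold tf; split_ifs <;> omega
private lemma tf_eval_mid {i j p : ℕ} (h1 : i ≤ p) (h2 : p < j) : tf i j p = p + 1 := by
  unfold tf; split_ifs <;> omega
private lemma tf_eval_down {i j p : ℕ} (h1 : j < p) (h2 : p ≤ i) : tf i j p = p - 1 := by
  unfold tf; split_ifs <;> omega

private lemma tf_unique {n a b c d : ℕ} (hb : b < n)
    (hab : a + 2 ≤ b ∨ b + 2 ≤ a)
    (h : ∀ p, p < n → tf a b p = tf c d p) : a = c ∧ b = d := by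
  have e := h b hb
  unfold tf at e
  split_ifs at e <;> omega

private lemma transloc_apply {n : ℕ} (i j p : Fin n) :
    ((transloc i j) p).val = tf i.val j.val p.val := rfl

private lemma transloc_eq_iff {n : ℕ} {i j c d : Fin n}
    (hab : i.val + 2 ≤ j.val ∨ j.val + 2 ≤ i.val)
    (h : transloc i j = transloc c d) : i = c ∧ j = d := by
  have hp : ∀ p, p < n → tf i.val j.val p = tf c.val d.val p := by
    intro p hpn
    have h2 := DFunLike.congr_fun h (⟨p, hpn⟩ : Fin n)
    have := congrArg Fin.val h2
    simpa [transloc_apply] using this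
  obtain ⟨h1, h2⟩ := tf_unique j.isLt hab hp
  exact ⟨Fin.ext h1, Fin.ext h2⟩

private lemma transloc_ne_one {n : ℕ} {i j : Fin n} (h : i ≠ j) : transloc i j ≠ 1 := by
  intro he
  apply h
  have h2 : ((transloc i j) j).val = j.val := by rw [he]; simp
  rw [transloc_apply, tf_eval_self] at h2
  exact Fin.ext h2

private lemma const_chain (M : ℕ → ℤ) {i k : ℕ}
    (h : ∀ p, i ≤ p → p < k → M p = M (p + 1)) :
    ∀ p, i ≤ p → p ≤ k → M p = M i := by
  intro p hp1
  obtain ⟨d, rfl⟩ := Nat.exists_eq_add_of_le hp1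
  clear hp1
  induction d with
  | zero => intro _; rfl
  | succ d ih =>
    intro hp2
    have h1 := h (i + d) (by omega) (by omega)
    have e : i + (d + 1) = i + d + 1 := rfl
    rw [e, ← h1]
    exact ih (by omega)

private lemma alt_chain (M : ℕ → ℤ) {k j : ℕ}
    (h : ∀ p, k + 1 ≤ p → p < j → M (p + 1) = M (p - 1)) :
    ∀ p, k ≤ p → p ≤ j → M p = if Even (p - k) then M k else M (k + 1) := by
  intro p hp1
  obtain ⟨d, rfl⟩ := Nat.exists_eq_add_of_le hp1
  clear hp1
  induction d using Nat.strong_induction_on with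
  | _ d ih =>
    intro hp2
    match d, ih with
    | 0, _ => simp
    | 1, _ =>
      have e : k + 1 - k = 1 := by omega
      rw [e]; norm_num
    | (d + 2), ih =>
      have h1 := h (k + d + 1) (by omega) (by omega)
      have e1 : k + d + 1 + 1 = k + (d + 2) := by omega
      have e2 : k + d + 1 - 1 = k + d := by omega
      rw [e1, e2] at h1
      have h2 := ih d (by omega) (by omega)
      rw [h1, h2]
      have e3 : k + d - k = d := by omega
      have e4 : k + (d + 2) - k = d + 2 := by omega
      rw [e3, e4]
      simp only [Nat.even_iff]
      have : (d + 2) % 2 = d % 2 := by omega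
      rw [this]

private lemma notMem_Dset {n : ℕ} {m : Fin n → ℤ} {a b : Fin n}
    (hab : a.val + 2 ≤ b.val ∨ b.val + 2 ≤ a.val)
    (h1 : m a ≠ m b)
    (h2 : a.val = 0 ∨ m a ≠ m ⟨a.val - 1, lt_of_le_of_lt (Nat.sub_le _ _) a.isLt⟩) :
    transloc a b ∉ Dset m := by
  rintro ⟨c, d, hcd, hne1, hrep, hdup⟩
  obtain ⟨hc, hd⟩ := transloc_eq_iff hab hrep
  subst hc; subst hd
  rcases hdup with h | ⟨hpos, h⟩
  · exact h1 h
  · rcases h2 with h0 | h0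
    · omega
    · exact h0 h

private lemma Dset_cond {n : ℕ} {m : Fin n → ℤ} {a b : Fin n}
    (hne : a ≠ b) (h1 : a.val ≠ b.val + 1) (hd : transloc a b ∉ Dset m) :
    m a ≠ m b ∧ (a.val = 0 ∨
      m a ≠ m ⟨a.val - 1, lt_of_le_of_lt (Nat.sub_le _ _) a.isLt⟩) := by
  constructor
  · intro hc; exact hd ⟨a, b, h1, transloc_ne_one hne, rfl, Or.inl hc⟩
  · by_cases h0 : a.val = 0
    · exact Or.inl h0
    · refine Or.inr fun hc => ?_
      exact hd ⟨a, b, h1, transloc_ne_one hne, rfl,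
        Or.inr ⟨Nat.pos_of_ne_zero h0, hc⟩⟩

/-- `E_i(m)` is nonempty iff `m(i) ≠ m(i−1)` (or `i` is the first index), and there
are `j > i` and `k ∈ [i, j−2]` such that `m` is constant on `[i,k]`, the substring
`m[k,j]` is alternating, and `m[k,j]` has length at least 4. -/
theorem Eset_i_nonempty_iff {n : ℕ} (m : Fin n → ℤ) (i : Fin n) :
    (∃ φ ∈ Eset m, ∃ j : Fin n, φ = transloc i j) ↔
      ((i.val = 0 ∨
          m i ≠ m ⟨i.val - 1, lt_of_le_of_lt (Nat.sub_le _ _) i.isLt⟩) ∧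
       ∃ j : Fin n, i < j ∧
         ∃ k : Fin n, i ≤ k ∧ ∃ hkj : k.val + 2 ≤ j.val,
           (∀ p : Fin n, i.val ≤ p.val → ∀ hpk : p.val < k.val,
             m p = m ⟨p.val + 1, Nat.lt_of_le_of_lt (Nat.succ_le_of_lt hpk) k.isLt⟩) ∧
           (∀ p : Fin n, k.val ≤ p.val → p.val ≤ j.val →
             m p = if Even (p.val - k.val) then m k
               else m ⟨k.val + 1, Nat.lt_of_le_of_lt (by omega) j.isLt⟩) ∧
           m k ≠ m ⟨k.val + 1, Nat.lt_of_le_of_lt (by omega) j.isLt⟩ ∧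
           4 ≤ j.val - k.val + 1) := by
  set M : ℕ → ℤ := fun p => if h : p < n then m ⟨p, h⟩ else 0 with hMdef
  have hM : ∀ (p : ℕ) (hp : p < n), m ⟨p, hp⟩ = M p := by
    intro p hp
    rw [hMdef]
    simp only [hp, dif_pos]
  have hM' : ∀ p : Fin n, m p = M p.val := fun p => hM p.val p.isLt
  have comp_iff : ∀ (a b c d : Fin n), (m ∘ ⇑(transloc a b) = m ∘ ⇑(transloc c d)) ↔
      ∀ p, p < n → M (tf a.val b.val p) = M (tf c.val d.val p) := by
    intro a b c d
    constructor
    · intro h p hp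
      have h2 := congrFun h ⟨p, hp⟩
      simp only [Function.comp_apply, hM'] at h2
      simpa [transloc_apply] using h2
    · intro h
      funext p
      have h2 := h p.val p.isLt
      simp only [Function.comp_apply, hM']
      simpa [transloc_apply] using h2
  constructor
  · rintro ⟨φ, hφE, j', hφ⟩
    obtain ⟨i₀, j, hrep, hT, hD, hij, k, hik, hkj, hT', hD', hcomp⟩ := hφE
    rw [hrep] at hD
    have hik0 : i₀.val ≤ k.val := hik
    have heq : transloc i₀ j = transloc i j' := by rw [← hrep, hφ]
    obtain ⟨hie, -⟩ := transloc_eq_iff (Or.inl (by omega)) heq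
    rw [hie] at hcomp hij hik hik0 hD
    have hpt := (comp_iff i j j k).mp hcomp
    have hkv : k.val < n := k.isLt
    have hjv : j.val < n := j.isLt
    have hijv : i.val < j.val := hij
    have hconstN : ∀ p, i.val ≤ p → p < k.val → M p = M (p + 1) := by
      intro p h1 h2
      have h3 := hpt p (by omega)
      rw [tf_eval_mid h1 (by omega), tf_eval_lo (by omega) h2] at h3
      exact h3.symm
    have hkj0 : M (k.val + 1) = M j.val := by
      have h3 := hpt k.val hkv
      rw [tf_eval_mid hik0 (by omega), tf_eval_self] at h3
      exact h3
    have hmidN : ∀ p, k.val + 1 ≤ p → p < j.val → M (p + 1) = M (p - 1) := by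
      intro p h1 h2
      have h3 := hpt p (by omega)
      rw [tf_eval_mid (by omega) h2, tf_eval_down (by omega) (by omega)] at h3
      exact h3
    have halt := alt_chain M hmidN
    have hconstM := const_chain M hconstN
    obtain ⟨hd1, hd2⟩ := Dset_cond (Fin.ne_of_lt hij) (by omega) hD
    rw [hM' i, hM' j] at hd1
    have hj_alt := halt j.val (by omega) (le_refl _)
    have hik_eq : M k.val = M i.val := hconstM k.val hik0 (le_refl _)
    have hpar : ¬ Even (j.val - k.val) := by
      intro hev
      rw [if_pos hev] at hj_alt
      apply hd1
      rw [hj_alt]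
      exact hik_eq.symm
    rw [if_neg hpar] at hj_alt
    have hnekk : M k.val ≠ M (k.val + 1) := by
      intro h
      apply hd1
      rw [← hik_eq, h]
      exact hj_alt.symm
    refine ⟨hd2, j, hij, k, hik, hkj, ?_, ?_, ?_, ?_⟩
    · intro p h1 h2
      rw [hM' p, hM]
      exact hconstN p.val h1 h2
    · intro p h1 h2
      rw [hM' p, hM' k, hM]
      exact halt p.val h1 h2
    · rw [hM' k, hM]
      exact hnekk
    · rw [Nat.even_iff] at hpar
      omega
  · rintro ⟨h1, j, hij, k, hik, hkj, hconst, halt, hnekk, hlen⟩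
    have hijv : i.val < j.val := hij
    have hikv : i.val ≤ k.val := hik
    have hjv : j.val < n := j.isLt
    have hconstN : ∀ p, i.val ≤ p → p < k.val → M p = M (p + 1) := by
      intro p hp1 hp2
      have h2 := hconst ⟨p, by omega⟩ hp1 hp2
      rw [hM, hM] at h2
      exact h2
    have haltN : ∀ p, k.val ≤ p → p ≤ j.val →
        M p = if Even (p - k.val) then M k.val else M (k.val + 1) := by
      intro p hp1 hp2
      have h2 := halt ⟨p, by omega⟩ hp1 hp2
      rw [hM, hM' k, hM] at h2
      exact h2
    have hnekkN : M k.val ≠ M (k.val + 1) := by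
      rw [hM' k, hM] at hnekk
      exact hnekk
    have hconstM := const_chain M hconstN
    obtain ⟨jv, hj1, hj2, hj3⟩ : ∃ q, k.val + 3 ≤ q ∧ q ≤ j.val ∧ (q - k.val) % 2 = 1 := by
      rcases Nat.even_or_odd (j.val - k.val) with h | h
      · obtain ⟨t, ht⟩ := h
        exact ⟨j.val - 1, by omega, by omega, by omega⟩
      · obtain ⟨t, ht⟩ := h
        exact ⟨j.val, by omega, by omega, by omega⟩
    have hjvn : jv < n := by omega
    set J : Fin n := ⟨jv, hjvn⟩ with hJ
    have hJval : J.val = jv := rfl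
    have hMjv : M jv = M (k.val + 1) := by
      have h2 := haltN jv (by omega) hj2
      rw [if_neg (by simp only [Nat.even_iff]; omega)] at h2
      exact h2
    have hMjv1 : M (jv - 1) = M k.val := by
      have h2 := haltN (jv - 1) (by omega) (by omega)
      rw [if_pos (by simp only [Nat.even_iff]; omega)] at h2
      exact h2
    have hMik : M i.val = M k.val := (hconstM k.val hikv (le_refl _)).symm
    have hne_iJ : m i ≠ m J := by
      rw [hM' i, hM' J, hJval]
      intro hcon
      apply hnekkN
      rw [← hMik, ← hMjv]
      exact hcon
    have hne_Jk : m J ≠ m k := by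
      rw [hM' J, hM' k, hJval, hMjv]
      exact fun hcon => hnekkN hcon.symm
    have hDJ : transloc i J ∉ Dset m :=
      notMem_Dset (Or.inl (show i.val + 2 ≤ J.val by rw [hJval]; omega)) hne_iJ h1
    have hDJk : transloc J k ∉ Dset m := by
      apply notMem_Dset (Or.inr (show k.val + 2 ≤ J.val by rw [hJval]; omega)) hne_Jk
      right
      rw [hM' J, hM, hJval, hMjv, hMjv1]
      exact fun hcon => hnekkN hcon.symm
    have hTJ : transloc i J ∈ Tset n := ⟨i, J, by rw [hJval]; omega, rfl⟩
    have hTJk : transloc J k ∈ Tset n := ⟨J, k, by rw [hJval]; omega, rfl⟩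
    have hcomp : m ∘ ⇑(transloc i J) = m ∘ ⇑(transloc J k) := by
      rw [comp_iff i J J k]
      intro p hp
      rw [hJval]
      rcases lt_or_ge p i.val with hc | hc
      · rw [tf_eval_lo hc (by omega), tf_eval_lo (by omega) (by omega)]
      rcases lt_or_ge p k.val with hc2 | hc2
      · rw [tf_eval_mid hc (by omega), tf_eval_lo (by omega) hc2]
        exact (hconstN p hc hc2).symm
      rcases eq_or_lt_of_le hc2 with hc3 | hc3
      · rw [← hc3, tf_eval_mid (by omega) (by omega), tf_eval_self]
        exact hMjv.symm
      rcases lt_or_ge p jv with hc4 | hc4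
      · rw [tf_eval_mid (by omega) hc4, tf_eval_down hc3 (by omega)]
        have e1 := haltN (p + 1) (by omega) (by omega)
        have e2 := haltN (p - 1) (by omega) (by omega)
        rw [e1, e2]
        simp only [Nat.even_iff]
        have e3 : (p + 1 - k.val) % 2 = (p - 1 - k.val) % 2 := by omega
        rw [e3]
      rcases eq_or_lt_of_le hc4 with hc5 | hc5
      · rw [← hc5, tf_eval_self, tf_eval_down (by omega) (le_refl _)]
        rw [hMik, hMjv1]
      · rw [tf_eval_hi (by omega) hc5, tf_eval_hi hc5 (by omega)]
    exact ⟨transloc i J, ⟨i, J, rfl, hTJ, hDJ,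
      (show i < J by rw [Fin.lt_def, hJval]; omega), k, hik,
      (show k.val + 2 ≤ J.val by rw [hJval]; omega), hTJk, hDJk, hcomp⟩, J, rfl⟩


end UlamPaper
end
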